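/- arXiv:2310.07919 — 3 statements merged into one kernel-verified Lean document; each statement's English description precedes it below -/
import Mathlib

section
/- Let t₁ and t₂ be histories on labels Y, let s₁ be a subhistory of t₁ and s₂ a subhistory of t₂ such that s₁ and s₂ are conforming, and let t₁' = t₁ ◁ s₂ and t₂' = t₂ ◁ s₁. Let f be an edge weight function taking values in a weight set W that is clade-ordered. Then g_f(t₁') < g_f(t₁) if and only if g_f(t₂') > g_f(t₂). -/
universe u v

/-- A node of a history sDAG: either the universal ancestor (UA) node `ρ`,
or a node carrying a label `ℓ : Y` and a subpartition `U : Set (Set Y)`. -/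
inductive HNode (Y : Type u) : Type u
  | ua : HNode Y
  | node : Y → Set (Set Y) → HNode Y

namespace HistorySDAGs

variable {Y : Type u}

/-- `U ∈ Part(Y)`: `U` is a set of pairwise disjoint nonempty (finite) clades with `|U| ≠ 1`. -/
def IsPart (U : Set (Set Y)) : Prop :=
  (∀ C ∈ U, C ≠ ∅) ∧
  (∀ C₁ ∈ U, ∀ C₂ ∈ U, C₁ ≠ C₂ → Disjoint C₁ C₂) ∧
  (∀ C, U ≠ {C}) ∧
  U.Finite ∧ ∀ C ∈ U, C.Finite

open Classical in
/-- The clade union of a node. -/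
noncomputable def cladeUnion : HNode Y → Set Y
  | HNode.ua => ∅
  | HNode.node ℓ U => if U = ∅ then {ℓ} else ⋃₀ U

/-- Reachability via directed edges in `E`. -/
def Reach (E : Set (HNode Y × HNode Y)) (a b : HNode Y) : Prop :=
  Relation.ReflTransGen (fun x y => (x, y) ∈ E) a b

/-- `(V, E)` is a history sDAG on labels `Y`. -/
structure IsHSDAG (V : Set (HNode Y)) (E : Set (HNode Y × HNode Y)) : Prop where
  ua_mem : HNode.ua ∈ V
  valid : ∀ ℓ U, HNode.node ℓ U ∈ V → IsPart U
  edge_mem : ∀ e ∈ E, e.1 ∈ V ∧ e.2 ∈ V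
  reach_ua : ∀ v ∈ V, Reach E HNode.ua v
  no_in_ua : ∀ v : HNode Y, (v, HNode.ua) ∉ E
  edge_clade : ∀ ℓ U v, (HNode.node ℓ U, v) ∈ E → cladeUnion v ∈ U
  clade_cov : ∀ ℓ U, HNode.node ℓ U ∈ V → ∀ C ∈ U,
      ∃ v, (HNode.node ℓ U, v) ∈ E ∧ cladeUnion v = C

/-- Every node-clade pair of `V` has exactly one descendant edge in `E`. -/
def UniqueDesc (V : Set (HNode Y)) (E : Set (HNode Y × HNode Y)) : Prop :=
  ∀ ℓ U, HNode.node ℓ U ∈ V → ∀ C ∈ U,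
    ∃! vc, (HNode.node ℓ U, vc) ∈ E ∧ cladeUnion vc = C

/-- `(V, E)` is a history: a history sDAG in which `ρ` has exactly one child and
each node-clade pair has exactly one descendant edge. -/
def IsHistory (V : Set (HNode Y)) (E : Set (HNode Y × HNode Y)) : Prop :=
  IsHSDAG V E ∧ (∃! v, (HNode.ua, v) ∈ E) ∧ UniqueDesc V E

/-- `(Vs, Es)` is a subhistory of `(V, E)` with root node `vr`. -/
structure IsSubhistoryRooted (V : Set (HNode Y)) (E : Set (HNode Y × HNode Y))
    (Vs : Set (HNode Y)) (Es : Set (HNode Y × HNode Y)) (vr : HNode Y) : Prop where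
  subV : Vs ⊆ V
  subE : Es ⊆ E
  ua_not_mem : HNode.ua ∉ Vs
  edge_mem : ∀ e ∈ Es, e.1 ∈ Vs ∧ e.2 ∈ Vs
  root_mem : vr ∈ Vs
  reach_root : ∀ v ∈ Vs, Reach Es vr v
  unique_desc : ∀ ℓ U, HNode.node ℓ U ∈ Vs → ∀ C ∈ U,
      ∃! vc, (HNode.node ℓ U, vc) ∈ Es ∧ cladeUnion vc = C

/-- `(Vs, Es)` is a subhistory of `(V, E)`. -/
def IsSubhistory (V : Set (HNode Y)) (E : Set (HNode Y × HNode Y))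
    (Vs : Set (HNode Y)) (Es : Set (HNode Y × HNode Y)) : Prop :=
  ∃ vr, IsSubhistoryRooted V E Vs Es vr

/-- `(Vt, Et)` is a history in (a trim of) the history sDAG `(V, E)`. -/
def HistoryIn (V : Set (HNode Y)) (E : Set (HNode Y × HNode Y))
    (Vt : Set (HNode Y)) (Et : Set (HNode Y × HNode Y)) : Prop :=
  Vt ⊆ V ∧ Et ⊆ E ∧ IsHistory Vt Et

/-- The set of labels of leaf nodes in a node set. -/
def leafLabels (Vt : Set (HNode Y)) : Set Y := {ℓ | HNode.node ℓ ∅ ∈ Vt}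

/-- A candidate history/graph: a pair of a node set and an edge set. -/
abbrev Hist (Y : Type u) := Set (HNode Y) × Set (HNode Y × HNode Y)

/-- The node set of the history sDAG constructed from the collection `T`. -/
def unionV (T : Set (Hist Y)) : Set (HNode Y) := ⋃ t ∈ T, t.1

/-- The edge set of the history sDAG constructed from the collection `T`. -/
def unionE (T : Set (Hist Y)) : Set (HNode Y × HNode Y) := ⋃ t ∈ T, t.2

/-- The node set of the complete history sDAG on labels `Y`. -/
def completeV (Y : Type u) : Set (HNode Y) :=
  {v | v = HNode.ua ∨ ∃ ℓ U, v = HNode.node ℓ U ∧ IsPart U}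

/-- The edge set of the complete history sDAG on labels `Y`. -/
def completeE (Y : Type u) : Set (HNode Y × HNode Y) :=
  {e | e.1 ∈ completeV Y ∧ e.2 ∈ completeV Y ∧ e.2 ≠ HNode.ua ∧
    (e.1 = HNode.ua ∨ ∃ ℓ U, e.1 = HNode.node ℓ U ∧ cladeUnion e.2 ∈ U)}

variable {W : Type v}

/-- The weight `g_f` of a subgraph with edge set `Es`: the sum of `f` over all edges. -/
noncomputable def gweight [AddCommMonoid W] (f : HNode Y × HNode Y → W)
    (Es : Set (HNode Y × HNode Y)) : W := ∑ᶠ e ∈ Es, f e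

/-- The order is total on the subset `S` of `W`. -/
def TotalOn [PartialOrder W] (S : Set W) : Prop := ∀ a ∈ S, ∀ b ∈ S, a ≤ b ∨ b ≤ a

/-- The order respects addition on the subset `S` of `W`. -/
def RespectsAdd [AddCommMonoid W] [PartialOrder W] (S : Set W) : Prop :=
  ∀ a ∈ S, ∀ b ∈ S, ∀ c : W, a < b ↔ a + c < b + c

/-- Weights of subhistories of `(V, E)` rooted at `v`. -/
def subWeights [AddCommMonoid W] (f : HNode Y × HNode Y → W)
    (V : Set (HNode Y)) (E : Set (HNode Y × HNode Y)) (v : HNode Y) : Set W :=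
  {w | ∃ Vs Es, IsSubhistoryRooted V E Vs Es v ∧ w = gweight f Es}

/-- Weights of augmented subhistories below the node-clade pair `(v, C)`. -/
def augWeights [AddCommMonoid W] (f : HNode Y × HNode Y → W)
    (V : Set (HNode Y)) (E : Set (HNode Y × HNode Y)) (v : HNode Y) (C : Set Y) : Set W :=
  {w | ∃ vc Vs Es, (v, vc) ∈ E ∧ cladeUnion vc = C ∧ IsSubhistoryRooted V E Vs Es vc ∧
    w = gweight f (insert (v, vc) Es)}

/-- Weights of histories in `(V, E)`. -/
def historyWeights [AddCommMonoid W] (f : HNode Y × HNode Y → W)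
    (V : Set (HNode Y)) (E : Set (HNode Y × HNode Y)) : Set W :=
  {w | ∃ Vt Et, HistoryIn V E Vt Et ∧ w = gweight f Et}

/-- `W` is clade-ordered with respect to `f` and `(V, E)`. -/
def CladeOrdered [AddCommMonoid W] [PartialOrder W] (f : HNode Y × HNode Y → W)
    (V : Set (HNode Y)) (E : Set (HNode Y × HNode Y)) : Prop :=
  (∀ v ∈ V, v ≠ HNode.ua →
      TotalOn (subWeights f V E v) ∧ RespectsAdd (subWeights f V E v)) ∧
  (∀ ℓ U, HNode.node ℓ U ∈ V → ∀ C ∈ U,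
      TotalOn (augWeights f V E (HNode.node ℓ U) C) ∧
      RespectsAdd (augWeights f V E (HNode.node ℓ U) C)) ∧
  TotalOn (historyWeights f V E)

/-- The minimum-weight histories in `(V, E)` with respect to `g_f`. -/
def minHistories [AddCommMonoid W] [PartialOrder W] (f : HNode Y × HNode Y → W)
    (V : Set (HNode Y)) (E : Set (HNode Y × HNode Y)) : Set (Hist Y) :=
  {t | HistoryIn V E t.1 t.2 ∧
    ∀ t' : Hist Y, HistoryIn V E t'.1 t'.2 → gweight f t.2 ≤ gweight f t'.2}

open Classical in
/-- The map `q` collapsing the edge `(vp, vc)`, sending both `vp` and `vc` to `vp'`. -/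
noncomputable def collapseMap (vp vc vp' : HNode Y) (v : HNode Y) : HNode Y :=
  if v = vp ∨ v = vc then vp' else v

/-- The history obtained by collapsing the edge `(vp, vc)` (into `vp'`) in `t`. -/
noncomputable def collapseEdgeHist (vp vc vp' : HNode Y) (t : Hist Y) : Hist Y :=
  (collapseMap vp vc vp' '' t.1,
   (fun e : HNode Y × HNode Y => (collapseMap vp vc vp' e.1, collapseMap vp vc vp' e.2)) ''
     (t.2 \ {(vp, vc)}))

/-- The new parent node `(ℓ_p, (U_p ∪ U_c) \ {CU(v_c)})` formed when collapsing an edge. -/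
noncomputable def newParent : HNode Y → HNode Y → HNode Y
  | HNode.node ℓp Up, HNode.node ℓc Uc =>
      HNode.node ℓp ((Up ∪ Uc) \ {cladeUnion (HNode.node ℓc Uc)})
  | v, _ => v

/-- `t'` results from `t` by collapsing one label-collapsible edge. -/
def LabelCollapseStep (t t' : Hist Y) : Prop :=
  ∃ ℓ Up Uc, (HNode.node ℓ Up, HNode.node ℓ Uc) ∈ t.2 ∧ Uc ≠ ∅ ∧
    t' = collapseEdgeHist (HNode.node ℓ Up) (HNode.node ℓ Uc)
        (newParent (HNode.node ℓ Up) (HNode.node ℓ Uc)) t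

/-- `t` is label-collapsed: it has no label-collapsible edge. -/
def LabelCollapsed (t : Hist Y) : Prop :=
  ∀ ℓ Up Uc, (HNode.node ℓ Up, HNode.node ℓ Uc) ∈ t.2 → Uc = ∅

/-- `(vp, vc)` is a label-collapsible edge of `G`. -/
def LabelCollapsibleEdge (G : Hist Y) (vp vc : HNode Y) : Prop :=
  (vp, vc) ∈ G.2 ∧ ∃ ℓ Up Uc, vp = HNode.node ℓ Up ∧ vc = HNode.node ℓ Uc ∧ Uc ≠ ∅

/-- `T` is a label-collapsible edge cover of `G`. -/
def LabelCollapsibleEdgeCover (G : Hist Y) (T : Set (Hist Y)) : Prop :=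
  (∀ t ∈ T, HistoryIn G.1 G.2 t.1 t.2) ∧
  (∀ e ∈ G.2, ∃ t ∈ T, e ∈ t.2) ∧
  (∀ vp vc, LabelCollapsibleEdge G vp vc →
    ∀ Vs Es, IsSubhistory G.1 G.2 Vs Es → (vp, vc) ∈ Es →
      ∃ t ∈ T, Vs ⊆ t.1 ∧ Es ⊆ t.2)

open Classical in
/-- Collapsing the edge `(vp, vc)` in the history sDAG `G`, via `E⁺`, `R`, `E⁻`, `E'`, `V'`. -/
noncomputable def collapseDAGEdge (vp vc : HNode Y) (G : Hist Y) : Hist Y :=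
  let vp' := newParent vp vc
  let Eplus : Set (HNode Y × HNode Y) :=
    (G.2 ∪ {e | ∃ v, e = (v, vp') ∧ (v, vp) ∈ G.2}
        ∪ {e | ∃ v, e = (vp', v) ∧ (vp, v) ∈ G.2 ∧ cladeUnion v ≠ cladeUnion vc}
        ∪ {e | ∃ v, e = (vp', v) ∧ (vc, v) ∈ G.2}) \ {(vp, vc)}
  let R : Set (HNode Y × HNode Y) :=
    if ∃ v, (vp, v) ∈ Eplus ∧ cladeUnion v = cladeUnion vc then ∅
    else {e ∈ Eplus | e.2 = vp}
  let Eminus := Eplus \ R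
  let E' := {e ∈ Eminus | Reach Eminus HNode.ua e.1}
  ({v | ∃ e ∈ E', v = e.1 ∨ v = e.2}, E')

/-- `t'` is obtained from `t` by a subhistory swap, replacing a subhistory of `t` by a
conforming subhistory of some history in `S`. -/
def SwapStepUsing (S : Set (Hist Y)) (t t' : Hist Y) : Prop :=
  ∃ t₂ ∈ S, ∃ Vs' Es' vr' vp,
    IsSubhistoryRooted t₂.1 t₂.2 Vs' Es' vr' ∧ (vp, vr') ∈ t₂.2 ∧
    ∃ Vs Es vr, IsSubhistoryRooted t.1 t.2 Vs Es vr ∧ (vp, vr) ∈ t.2 ∧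
      leafLabels Vs = leafLabels Vs' ∧
      t' = ((t.1 \ Vs) ∪ Vs', (t.2 \ (Es ∪ {(vp, vr)})) ∪ (Es' ∪ {(vp, vr')}))

/-- Leaves of an abstract rooted graph. -/
def IsLeafIn {α : Type v} (nodes : Set α) (edges : Set (α × α)) (x : α) : Prop :=
  x ∈ nodes ∧ ∀ c, (x, c) ∉ edges

/-- Reachability via directed edges in an abstract graph. -/
def GReach {α : Type v} (edges : Set (α × α)) (a b : α) : Prop :=
  Relation.ReflTransGen (fun x y => (x, y) ∈ edges) a b

/-- An (internally) labeled tree: a rooted multifurcating tree with no unifurcations,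
with node labels in `Y` that are injective on leaves. -/
structure IsLabeledTree {α : Type v} (nodes : Set α) (edges : Set (α × α))
    (root : α) (lab : α → Y) : Prop where
  root_mem : root ∈ nodes
  edge_mem : ∀ e ∈ edges, e.1 ∈ nodes ∧ e.2 ∈ nodes
  reach_root : ∀ x ∈ nodes, GReach edges root x
  unique_parent : ∀ x a b, (a, x) ∈ edges → (b, x) ∈ edges → a = b
  no_parent_root : ∀ a, (a, root) ∉ edges
  acyclic : ∀ x, ¬ Relation.TransGen (fun a b => (a, b) ∈ edges) x x
  no_unif : ∀ x ∈ nodes, ¬ (∃! c, (x, c) ∈ edges)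
  leaf_inj : ∀ x y, IsLeafIn nodes edges x → IsLeafIn nodes edges y → lab x = lab y → x = y
  finite : nodes.Finite

/-- The set `C_w` of leaf labels below a node `w` of an abstract labeled tree. -/
def leavesBelow {α : Type v} (nodes : Set α) (edges : Set (α × α)) (lab : α → Y) (w : α) :
    Set Y :=
  {y | ∃ u, IsLeafIn nodes edges u ∧ GReach edges w u ∧ y = lab u}

/-- The history sDAG node `v_w` associated to a node `w` of a labeled tree. -/
def treeNodeOf {α : Type v} (nodes : Set α) (edges : Set (α × α)) (lab : α → Y) (w : α) :
    HNode Y :=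
  HNode.node (lab w) {C | ∃ w', (w, w') ∈ edges ∧ C = leavesBelow nodes edges lab w'}

/-- The node set `V_t` of the history associated to a labeled tree. -/
def treeToHistV {α : Type v} (nodes : Set α) (edges : Set (α × α)) (lab : α → Y) :
    Set (HNode Y) :=
  insert HNode.ua (treeNodeOf nodes edges lab '' nodes)

/-- The edge set `E_t` of the history associated to a labeled tree. -/
def treeToHistE {α : Type v} (nodes : Set α) (edges : Set (α × α)) (root : α) (lab : α → Y) :
    Set (HNode Y × HNode Y) :=
  insert (HNode.ua, treeNodeOf nodes edges lab root)
    {e | ∃ w₁ w₂, (w₁, w₂) ∈ edges ∧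
      e = (treeNodeOf nodes edges lab w₁, treeNodeOf nodes edges lab w₂)}
/-!
Put `X₁ = Es₁ ∪ {(vp, vr₁)}` and `X₂ = Es₂ ∪ {(vp, vr₂)}`. Conforming subhistories have the same
leaf labels, hence roots with the same clade union. Clade unions of a history are laminar and
determine their node, so every node of `t₁` whose clade union lies inside `CU vr₁` lies in `s₁`;
therefore `Et₁ \ X₁` is disjoint from `X₂` and
`g(t₁ ◁ s₂) = g(Et₁ \ X₁) + g(X₂)`, `g(t₁) = g(Et₁ \ X₁) + g(X₁)` (histories are finite, again by
laminarity). Both inequalities thus reduce to `g(X₂) < g(X₁)`, as `X₁` and `X₂` are augmented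
subhistories below the same node-clade pair `(vp, CU vr₁)`, on whose weights the order respects
addition. When `vp = ρ` the swap simply exchanges `Et₁` and `Et₂`.
-/

variable {V : Set (HNode Y)} {E : Set (HNode Y × HNode Y)}
  {Vs : Set (HNode Y)} {Es : Set (HNode Y × HNode Y)} {vr : HNode Y}

theorem cladeUnion_leaf (ℓ : Y) : cladeUnion (HNode.node ℓ ∅) = {ℓ} := by
  simp [cladeUnion]

theorem cladeUnion_node {ℓ : Y} {U : Set (Set Y)} (hU : U ≠ ∅) :
    cladeUnion (HNode.node ℓ U) = ⋃₀ U := by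
  simp [cladeUnion, hU]

namespace IsPart

variable {U : Set (Set Y)}

theorem exists_ne (hU : IsPart U) {C : Set Y} (hC : C ∈ U) : ∃ C' ∈ U, C' ≠ C := by
  by_contra! h
  exact hU.2.2.1 C (Set.eq_singleton_iff_unique_mem.mpr ⟨hC, h⟩)

theorem ssubset_sUnion (hU : IsPart U) {C : Set Y} (hC : C ∈ U) : C ⊂ ⋃₀ U := by
  obtain ⟨C', hC', hne⟩ := hU.exists_ne hC
  obtain ⟨y, hy⟩ := Set.nonempty_iff_ne_empty.mpr (hU.1 C' hC')
  refine Set.ssubset_iff_subset_ne.mpr ⟨Set.subset_sUnion_of_mem hC, fun heq => ?_⟩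
  have hyC : y ∈ C := heq ▸ ⟨C', hC', hy⟩
  exact Set.disjoint_left.mp (hU.2.1 C' hC' C hC hne) hy hyC

theorem sUnion_finite (hU : IsPart U) : (⋃₀ U).Finite :=
  hU.2.2.2.1.sUnion hU.2.2.2.2

theorem cladeUnion_finite (hU : IsPart U) (ℓ : Y) : (cladeUnion (HNode.node ℓ U)).Finite := by
  by_cases h : U = ∅
  · simp [h, cladeUnion_leaf]
  · rw [cladeUnion_node h]
    exact hU.sUnion_finite

theorem cladeUnion_nonempty (hU : IsPart U) (ℓ : Y) :
    (cladeUnion (HNode.node ℓ U)).Nonempty := by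
  by_cases h : U = ∅
  · simp [h, cladeUnion_leaf]
  · obtain ⟨C, hC⟩ := Set.nonempty_iff_ne_empty.mpr h
    rw [cladeUnion_node h]
    exact (Set.nonempty_iff_ne_empty.mpr (hU.1 C hC)).mono (Set.subset_sUnion_of_mem hC)

end IsPart

namespace IsHSDAG

theorem ne_ua_of_mem (hG : IsHSDAG V E) {a b : HNode Y} (he : (a, b) ∈ E) : b ≠ HNode.ua :=
  fun hb => hG.no_in_ua a (hb ▸ he)

theorem ne_ua_of_reach (hG : IsHSDAG V E) {a b : HNode Y} (hr : Reach E a b) (ha : a ≠ HNode.ua) :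
    b ≠ HNode.ua := by
  rcases Relation.ReflTransGen.cases_tail hr with rfl | ⟨c, -, hcb⟩
  · exact ha
  · exact hG.ne_ua_of_mem hcb

theorem cladeUnion_ssubset_of_mem (hG : IsHSDAG V E) {ℓ : Y} {U : Set (Set Y)} {b : HNode Y}
    (he : (HNode.node ℓ U, b) ∈ E) : cladeUnion b ⊂ cladeUnion (HNode.node ℓ U) := by
  have hb := hG.edge_clade ℓ U b he
  have hU : U ≠ ∅ := by rintro rfl; exact hb
  rw [cladeUnion_node hU]
  exact (hG.valid ℓ U (hG.edge_mem _ he).1).ssubset_sUnion hb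

theorem cladeUnion_subset_of_reach (hG : IsHSDAG V E) {a b : HNode Y} (hr : Reach E a b)
    (ha : a ≠ HNode.ua) : cladeUnion b ⊆ cladeUnion a := by
  induction hr with
  | refl => exact subset_rfl
  | @tail b c hab hbc ih =>
    cases b with
    | ua => exact absurd rfl (hG.ne_ua_of_reach hab ha)
    | node ℓ U => exact (hG.cladeUnion_ssubset_of_mem hbc).subset.trans ih

/-- Clade unions strictly shrink along edges, so a path cannot return to a clade union it left. -/
theorem eq_of_reach_of_cladeUnion_subset (hG : IsHSDAG V E) {u x : HNode Y} (hr : Reach E u x)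
    (hu : u ≠ HNode.ua) (hc : cladeUnion u ⊆ cladeUnion x) : x = u := by
  rcases Relation.ReflTransGen.cases_head hr with rfl | ⟨w, huw, hwx⟩
  · rfl
  · cases u with
    | ua => exact absurd rfl hu
    | node ℓ U =>
      have hxw := hG.cladeUnion_subset_of_reach hwx (hG.ne_ua_of_mem huw)
      exact absurd (hc.trans hxw) (hG.cladeUnion_ssubset_of_mem huw).not_subset

theorem cladeUnion_nonempty (hG : IsHSDAG V E) {v : HNode Y} (hv : v ∈ V) (hne : v ≠ HNode.ua) :
    (cladeUnion v).Nonempty := by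
  cases v with
  | ua => exact absurd rfl hne
  | node ℓ U => exact (hG.valid ℓ U hv).cladeUnion_nonempty ℓ

theorem cladeUnion_finite (hG : IsHSDAG V E) {v : HNode Y} (hv : v ∈ V) :
    (cladeUnion v).Finite := by
  cases v with
  | ua => simp [cladeUnion]
  | node ℓ U => exact (hG.valid ℓ U hv).cladeUnion_finite ℓ

theorem subset_completeV (hG : IsHSDAG V E) : V ⊆ completeV Y := by
  intro v hv
  cases v with
  | ua => exact Or.inl rfl
  | node ℓ U => exact Or.inr ⟨ℓ, U, rfl, hG.valid ℓ U hv⟩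

theorem subset_completeE (hG : IsHSDAG V E) : E ⊆ completeE Y := by
  rintro ⟨a, b⟩ he
  refine ⟨hG.subset_completeV (hG.edge_mem _ he).1, hG.subset_completeV (hG.edge_mem _ he).2,
    hG.ne_ua_of_mem he, ?_⟩
  cases a with
  | ua => exact Or.inl rfl
  | node ℓ U => exact Or.inr ⟨ℓ, U, rfl, hG.edge_clade ℓ U b he⟩

end IsHSDAG

namespace IsHistory

theorem eq_of_mem_of_cladeUnion_eq (h : IsHistory V E) {v w w' : HNode Y} (hw : (v, w) ∈ E)
    (hw' : (v, w') ∈ E) (hcu : cladeUnion w = cladeUnion w') : w = w' := by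
  cases v with
  | ua => exact h.2.1.unique hw hw'
  | node ℓ U =>
    exact (h.2.2 ℓ U (h.1.edge_mem _ hw).1 _ (h.1.edge_clade ℓ U w' hw')).unique
      ⟨hw, hcu⟩ ⟨hw', rfl⟩

/-- The clade unions of a history form a laminar family. -/
theorem reach_or_reach_of_inter_nonempty (h : IsHistory V E) {a u x : HNode Y} (hu : Reach E a u)
    (hx : Reach E a x) (hov : (cladeUnion u ∩ cladeUnion x).Nonempty) :
    Reach E u x ∨ Reach E x u := by
  induction hu using Relation.ReflTransGen.head_induction_on with
  | refl => exact Or.inl hx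
  | @head a c hac hcu ih =>
    rcases Relation.ReflTransGen.cases_head hx with rfl | ⟨c', hac', hc'x⟩
    · exact Or.inr (Relation.ReflTransGen.head hac hcu)
    by_cases hcc : c' = c
    · exact ih (hcc ▸ hc'x)
    exfalso
    cases a with
    | ua => exact hcc (h.2.1.unique hac' hac)
    | node ℓ U =>
      have hne : cladeUnion c ≠ cladeUnion c' :=
        fun heq => hcc (h.eq_of_mem_of_cladeUnion_eq hac hac' heq).symm
      have hdisj := (h.1.valid ℓ U (h.1.edge_mem _ hac).1).2.1 _ (h.1.edge_clade ℓ U c hac) _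
        (h.1.edge_clade ℓ U c' hac') hne
      obtain ⟨y, hyu, hyx⟩ := hov
      exact Set.disjoint_left.mp hdisj
        (h.1.cladeUnion_subset_of_reach hcu (h.1.ne_ua_of_mem hac) hyu)
        (h.1.cladeUnion_subset_of_reach hc'x (h.1.ne_ua_of_mem hac') hyx)

theorem cladeUnion_injOn (h : IsHistory V E) : Set.InjOn cladeUnion (V \ {HNode.ua}) := by
  rintro v ⟨hv, hvne⟩ w ⟨hw, hwne⟩ hcu
  have hov : (cladeUnion v ∩ cladeUnion w).Nonempty := by
    rw [← hcu, Set.inter_self]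
    exact h.1.cladeUnion_nonempty hv hvne
  rcases h.reach_or_reach_of_inter_nonempty (h.1.reach_ua v hv) (h.1.reach_ua w hw) hov
    with hr | hr
  · exact (h.1.eq_of_reach_of_cladeUnion_subset hr hvne hcu.le).symm
  · exact h.1.eq_of_reach_of_cladeUnion_subset hr hwne hcu.ge

/-- All clade unions are subsets of the finite clade union of the root, and they determine
the node. -/
theorem finite (h : IsHistory V E) : V.Finite := by
  obtain ⟨r, hr, hun⟩ := h.2.1
  have hrV : r ∈ V := (h.1.edge_mem _ hr).2
  have hsub : cladeUnion '' (V \ {HNode.ua}) ⊆ {C | C ⊆ cladeUnion r} := by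
    rintro _ ⟨v, ⟨hv, hvne⟩, rfl⟩
    rcases Relation.ReflTransGen.cases_head (h.1.reach_ua v hv) with rfl | ⟨w, hw, hwv⟩
    · exact absurd rfl hvne
    · exact h.1.cladeUnion_subset_of_reach (hun w hw ▸ hwv) (h.1.ne_ua_of_mem hr)
  exact (Set.Finite.of_finite_image ((h.1.cladeUnion_finite hrV).finite_subsets.subset hsub)
    h.cladeUnion_injOn).of_sdiff (Set.finite_singleton _)

theorem finite_edges (h : IsHistory V E) : E.Finite :=
  (h.finite.prod h.finite).subset fun e he => ⟨(h.1.edge_mem e he).1, (h.1.edge_mem e he).2⟩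

end IsHistory

namespace IsSubhistoryRooted

theorem mono (hs : IsSubhistoryRooted V E Vs Es vr) {V' : Set (HNode Y)}
    {E' : Set (HNode Y × HNode Y)} (hV : V ⊆ V') (hE : E ⊆ E') :
    IsSubhistoryRooted V' E' Vs Es vr :=
  ⟨hs.subV.trans hV, hs.subE.trans hE, hs.ua_not_mem, hs.edge_mem, hs.root_mem, hs.reach_root,
    hs.unique_desc⟩

theorem ne_ua_of_mem (hs : IsSubhistoryRooted V E Vs Es vr) {v : HNode Y} (hv : v ∈ Vs) :
    v ≠ HNode.ua :=
  fun h0 => hs.ua_not_mem (h0 ▸ hv)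

theorem reach_of_mem (hs : IsSubhistoryRooted V E Vs Es vr) {v : HNode Y} (hv : v ∈ Vs) :
    Reach E vr v :=
  Relation.ReflTransGen.mono (fun _ _ he => hs.subE he) _ _ (hs.reach_root v hv)

theorem leaf_mem_of_mem_cladeUnion (hs : IsSubhistoryRooted V E Vs Es vr) (hG : IsHSDAG V E)
    {v : HNode Y} (hv : v ∈ Vs) {y : Y} (hy : y ∈ cladeUnion v) : HNode.node y ∅ ∈ Vs := by
  induction hn : (cladeUnion v).ncard using Nat.strong_induction_on generalizing v with
  | _ n ih =>
  cases v with
  | ua => exact absurd rfl (hs.ne_ua_of_mem hv)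
  | node ℓ U =>
    by_cases hU : U = ∅
    · subst hU
      rw [cladeUnion_leaf, Set.mem_singleton_iff] at hy
      exact hy ▸ hv
    rw [cladeUnion_node hU] at hy hn
    obtain ⟨C, hC, hyC⟩ := hy
    obtain ⟨w, ⟨hw, rfl⟩, -⟩ := hs.unique_desc ℓ U hv C hC
    have hpart := hG.valid ℓ U (hs.subV hv)
    exact ih _ (hn ▸ Set.ncard_lt_ncard (hpart.ssubset_sUnion hC) hpart.sUnion_finite)
      (hs.edge_mem _ hw).2 hyC rfl

theorem leafLabels_eq (hs : IsSubhistoryRooted V E Vs Es vr) (hG : IsHSDAG V E) :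
    leafLabels Vs = cladeUnion vr := by
  refine Set.Subset.antisymm (fun ℓ hℓ => ?_) fun y hy =>
    hs.leaf_mem_of_mem_cladeUnion hG hs.root_mem hy
  have hsub := hG.cladeUnion_subset_of_reach (hs.reach_of_mem hℓ) (hs.ne_ua_of_mem hs.root_mem)
  exact hsub (by rw [cladeUnion_leaf]; rfl)

theorem mem_edges_of_fst_mem (hs : IsSubhistoryRooted V E Vs Es vr) (h : IsHistory V E)
    {a b : HNode Y} (he : (a, b) ∈ E) (ha : a ∈ Vs) : (a, b) ∈ Es := by
  cases a with
  | ua => exact absurd rfl (hs.ne_ua_of_mem ha)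
  | node ℓ U =>
    obtain ⟨w, ⟨hw, hwb⟩, -⟩ := hs.unique_desc ℓ U ha _ (h.1.edge_clade ℓ U b he)
    exact h.eq_of_mem_of_cladeUnion_eq (hs.subE hw) he hwb ▸ hw

theorem mem_of_reach (hs : IsSubhistoryRooted V E Vs Es vr) (h : IsHistory V E) {u : HNode Y}
    (hr : Reach E vr u) : u ∈ Vs := by
  induction hr with
  | refl => exact hs.root_mem
  | tail _ hbc ih => exact (hs.edge_mem _ (hs.mem_edges_of_fst_mem h hbc ih)).2

theorem mem_of_cladeUnion_subset (hs : IsSubhistoryRooted V E Vs Es vr) (h : IsHistory V E)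
    {a : HNode Y} (ha : a ∈ V) (hne : (cladeUnion a).Nonempty)
    (hsub : cladeUnion a ⊆ cladeUnion vr) : a ∈ Vs := by
  have hvr := hs.subV hs.root_mem
  have hov : (cladeUnion vr ∩ cladeUnion a).Nonempty := by
    rwa [Set.inter_eq_right.mpr hsub]
  rcases h.reach_or_reach_of_inter_nonempty (h.1.reach_ua vr hvr) (h.1.reach_ua a ha) hov
    with hr | hr
  · exact hs.mem_of_reach h hr
  · have hane : a ≠ HNode.ua := by rintro rfl; simp [cladeUnion] at hne
    obtain rfl := h.1.eq_of_reach_of_cladeUnion_subset hr hane hsub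
    exact hs.root_mem

theorem union_parent_subset (hs : IsSubhistoryRooted V E Vs Es vr) {vp : HNode Y}
    (hp : (vp, vr) ∈ E) : Es ∪ {(vp, vr)} ⊆ E :=
  Set.union_subset hs.subE (Set.singleton_subset_iff.mpr hp)

theorem union_ua_eq (hs : IsSubhistoryRooted V E Vs Es vr) (h : IsHistory V E)
    (hp : (HNode.ua, vr) ∈ E) : Es ∪ {(HNode.ua, vr)} = E := by
  refine (hs.union_parent_subset hp).antisymm ?_
  rintro ⟨a, b⟩ he
  by_cases ha : a = HNode.ua
  · subst ha
    exact Or.inr (by rw [h.2.1.unique he hp]; rfl)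
  · refine Or.inl (hs.mem_edges_of_fst_mem h he (hs.mem_of_reach h ?_))
    rcases Relation.ReflTransGen.cases_head (h.1.reach_ua a (h.1.edge_mem _ he).1)
      with heq | ⟨w, hw, hwa⟩
    · exact absurd heq.symm ha
    · exact h.2.1.unique hw hp ▸ hwa

theorem gweight_union_mem_augWeights [AddCommMonoid W] (hs : IsSubhistoryRooted V E Vs Es vr)
    (hG : IsHSDAG V E) (f : HNode Y × HNode Y → W) {vp : HNode Y} (hp : (vp, vr) ∈ E) :
    gweight f (Es ∪ {(vp, vr)}) ∈ augWeights f (completeV Y) (completeE Y) vp (cladeUnion vr) := by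
  refine ⟨vr, Vs, Es, hG.subset_completeE hp, rfl,
    hs.mono hG.subset_completeV hG.subset_completeE, ?_⟩
  rw [Set.union_singleton]

end IsSubhistoryRooted

section Swap

variable {Vt₁ Vt₂ Vs₁ Vs₂ : Set (HNode Y)} {Et₁ Et₂ Es₁ Es₂ : Set (HNode Y × HNode Y)}
  {vr₁ vr₂ vp : HNode Y}

theorem disjoint_sdiff_union_parent (h₁ : IsHistory Vt₁ Et₁) (h₂ : IsHistory Vt₂ Et₂)
    (hs₁ : IsSubhistoryRooted Vt₁ Et₁ Vs₁ Es₁ vr₁) (hs₂ : IsSubhistoryRooted Vt₂ Et₂ Vs₂ Es₂ vr₂)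
    (hp₁ : (vp, vr₁) ∈ Et₁) (hcu : cladeUnion vr₁ = cladeUnion vr₂) :
    Disjoint (Et₁ \ (Es₁ ∪ {(vp, vr₁)})) (Es₂ ∪ {(vp, vr₂)}) := by
  refine Set.disjoint_left.mpr fun ⟨a, b⟩ ⟨he₁, hnot⟩ he₂ => hnot ?_
  rcases he₂ with he₂ | he₂
  · have ha₂ := (hs₂.edge_mem _ he₂).1
    have ha₁ : a ∈ Vt₁ := (h₁.1.edge_mem _ he₁).1
    have hsub : cladeUnion a ⊆ cladeUnion vr₁ := hcu ▸
      h₂.1.cladeUnion_subset_of_reach (hs₂.reach_of_mem ha₂) (hs₂.ne_ua_of_mem hs₂.root_mem)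
    have hne := h₁.1.cladeUnion_nonempty ha₁ (hs₂.ne_ua_of_mem ha₂)
    exact Or.inl (hs₁.mem_edges_of_fst_mem h₁ he₁ (hs₁.mem_of_cladeUnion_subset h₁ ha₁ hne hsub))
  · obtain ⟨rfl, rfl⟩ := Prod.mk.inj he₂
    exact Or.inr (by rw [h₁.eq_of_mem_of_cladeUnion_eq he₁ hp₁ hcu.symm]; rfl)

variable [AddCommMonoid W] (f : HNode Y × HNode Y → W)

theorem gweight_union {A B : Set (HNode Y × HNode Y)} (hd : Disjoint A B) (hA : A.Finite)
    (hB : B.Finite) : gweight f (A ∪ B) = gweight f A + gweight f B :=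
  finsum_mem_union hd hA hB

theorem gweight_eq_sdiff_add {A B : Set (HNode Y × HNode Y)} (hA : A.Finite) (hB : B ⊆ A) :
    gweight f A = gweight f (A \ B) + gweight f B := by
  conv_lhs => rw [← Set.sdiff_union_of_subset hB]
  exact gweight_union f Set.disjoint_sdiff_left (hA.subset Set.sdiff_subset) (hA.subset hB)

theorem gweight_swap (h₁ : IsHistory Vt₁ Et₁) (h₂ : IsHistory Vt₂ Et₂)
    (hs₁ : IsSubhistoryRooted Vt₁ Et₁ Vs₁ Es₁ vr₁) (hs₂ : IsSubhistoryRooted Vt₂ Et₂ Vs₂ Es₂ vr₂)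
    (hp₁ : (vp, vr₁) ∈ Et₁) (hp₂ : (vp, vr₂) ∈ Et₂) (hcu : cladeUnion vr₁ = cladeUnion vr₂) :
    gweight f ((Et₁ \ (Es₁ ∪ {(vp, vr₁)})) ∪ (Es₂ ∪ {(vp, vr₂)})) =
      gweight f (Et₁ \ (Es₁ ∪ {(vp, vr₁)})) + gweight f (Es₂ ∪ {(vp, vr₂)}) :=
  gweight_union f (disjoint_sdiff_union_parent h₁ h₂ hs₁ hs₂ hp₁ hcu)
    (h₁.finite_edges.subset Set.sdiff_subset)
    (h₂.finite_edges.subset (hs₂.union_parent_subset hp₂))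

end Swap

theorem RespectsAdd.add_lt_add_iff_add_lt_add [AddCommMonoid W] [PartialOrder W] {S : Set W}
    (hS : RespectsAdd S) {x y : W} (hx : x ∈ S) (hy : y ∈ S) (a b : W) :
    a + x < a + y ↔ b + x < b + y := by
  rw [add_comm a, add_comm a, add_comm b, add_comm b]
  exact (hS x hx y hy a).symm.trans (hS x hx y hy b)

/-- Lemma `updownlittle`: swapping conforming subhistories between two
histories decreases the weight of one iff it increases the weight of the other. -/
theorem swap_updown {W : Type v} [AddCommMonoid W] [PartialOrder W]
    (f : HNode Y × HNode Y → W)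
    (hco : CladeOrdered f (completeV Y) (completeE Y))
    (Vt₁ Vt₂ : Set (HNode Y)) (Et₁ Et₂ : Set (HNode Y × HNode Y))
    (h₁ : IsHistory Vt₁ Et₁) (h₂ : IsHistory Vt₂ Et₂)
    (Vs₁ Es₁ : _) (vr₁ : HNode Y) (hs₁ : IsSubhistoryRooted Vt₁ Et₁ Vs₁ Es₁ vr₁)
    (Vs₂ Es₂ : _) (vr₂ : HNode Y) (hs₂ : IsSubhistoryRooted Vt₂ Et₂ Vs₂ Es₂ vr₂)
    (vp : HNode Y) (hp₁ : (vp, vr₁) ∈ Et₁) (hp₂ : (vp, vr₂) ∈ Et₂)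
    (hconf : leafLabels Vs₁ = leafLabels Vs₂) :
    (gweight f ((Et₁ \ (Es₁ ∪ {(vp, vr₁)})) ∪ (Es₂ ∪ {(vp, vr₂)})) < gweight f Et₁ ↔
      gweight f Et₂ < gweight f ((Et₂ \ (Es₂ ∪ {(vp, vr₂)})) ∪ (Es₁ ∪ {(vp, vr₁)}))) := by
  by_cases hvp : vp = HNode.ua
  · subst hvp
    rw [hs₁.union_ua_eq h₁ hp₁, hs₂.union_ua_eq h₂ hp₂, Set.sdiff_self, Set.sdiff_self,
      Set.empty_union, Set.empty_union]
  obtain ⟨ℓ, U, rfl⟩ : ∃ ℓ U, vp = HNode.node ℓ U := by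
    cases vp with
    | ua => exact absurd rfl hvp
    | node ℓ U => exact ⟨ℓ, U, rfl⟩
  have hcu : cladeUnion vr₁ = cladeUnion vr₂ := by
    rw [← hs₁.leafLabels_eq h₁.1, ← hs₂.leafLabels_eq h₂.1, hconf]
  have hx₁ := hs₁.gweight_union_mem_augWeights h₁.1 f hp₁
  have hx₂ := hs₂.gweight_union_mem_augWeights h₂.1 f hp₂
  rw [← hcu] at hx₂
  have hS := (hco.2.1 ℓ U (h₁.1.subset_completeV (h₁.1.edge_mem _ hp₁).1) _
    (h₁.1.edge_clade ℓ U vr₁ hp₁)).2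
  rw [gweight_swap f h₁ h₂ hs₁ hs₂ hp₁ hp₂ hcu, gweight_swap f h₂ h₁ hs₂ hs₁ hp₂ hp₁ hcu.symm,
    gweight_eq_sdiff_add f h₁.finite_edges (hs₁.union_parent_subset hp₁),
    gweight_eq_sdiff_add f h₂.finite_edges (hs₂.union_parent_subset hp₂)]
  exact hS.add_lt_add_iff_add_lt_add hx₂ hx₁ _ _

end HistorySDAGs
end

section
/- Let (V,E) be the complete history sDAG on labels Y. Given a history (V_t,E_t) in (V,E) with ρ's unique child v, set V' = V_t∖{ρ}, E' = E_t∖{(ρ,v)}, and φ : V' → Y defined by φ((ℓ,U)) = ℓ. Then the correspondence (V_t,E_t) ↦ (V',E',φ) is a well-defined map from histories in (V,E) to internally labeled trees with labels in Y: (V',E') is a rooted tree in which no node has exactly one child, and φ restricted to leaf nodes is injective. -/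
universe u v

namespace HistorySDAGs

variable {Y : Type u}

variable {W : Type v}

/-! Along an edge leaving a non-UA node `(ℓ, U)`, the child's clade union is one of at least two
pairwise disjoint nonempty clades of `U`, so clade unions shrink strictly. This rules out cycles
and a parent of the root. Distinct children of one node have disjoint clade unions, so two nodes
below a common ancestor whose clade unions meet are comparable; two parents of one node are such
a pair, and strict shrinking then forces them to coincide. -/

theorem IsPart.exists_ne_s17 {U : Set (Set Y)} (hU : IsPart U) {C : Set Y} (hC : C ∈ U) :
    ∃ C' ∈ U, C' ≠ C := by
  by_contra! h
  exact hU.2.2.1 C (Set.eq_singleton_iff_unique_mem.mpr ⟨hC, h⟩)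

theorem IsPart.ssubset_sUnion_s17 {U : Set (Set Y)} (hU : IsPart U) {C : Set Y} (hC : C ∈ U) :
    C ⊂ ⋃₀ U := by
  refine Set.ssubset_iff_subset_ne.mpr ⟨Set.subset_sUnion_of_mem hC, fun hCU => ?_⟩
  obtain ⟨C', hC', hne⟩ := hU.exists_ne_s17 hC
  obtain ⟨y, hy⟩ := Set.nonempty_iff_ne_empty.mpr (hU.1 C' hC')
  have hyC : y ∈ C := hCU ▸ Set.mem_sUnion_of_mem hy hC'
  exact Set.disjoint_left.mp (hU.2.1 C' hC' C hC hne) hy hyC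

theorem cladeUnion_node_of_mem {ℓ : Y} {U : Set (Set Y)} {C : Set Y} (hC : C ∈ U) :
    cladeUnion (HNode.node ℓ U) = ⋃₀ U := by
  simp [cladeUnion, Set.nonempty_iff_ne_empty.mp ⟨C, hC⟩]

def nonUAEdges (E : Set (HNode Y × HNode Y)) : Set (HNode Y × HNode Y) :=
  {e | e ∈ E ∧ e.1 ≠ HNode.ua}

theorem diff_singleton_ua_eq_nonUAEdges {E : Set (HNode Y × HNode Y)} {r : HNode Y}
    (hchild : ∀ v, (HNode.ua, v) ∈ E → v = r) :
    E \ {(HNode.ua, r)} = nonUAEdges E := by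
  ext ⟨a, b⟩
  constructor
  · rintro ⟨hab, hne⟩
    refine ⟨hab, fun ha => hne ?_⟩
    subst ha
    rw [hchild b hab, Set.mem_singleton_iff]
  · rintro ⟨hab, ha⟩
    exact ⟨hab, fun h => ha (congrArg Prod.fst (Set.mem_singleton_iff.mp h))⟩

theorem exists_ua_child_reach {E : Set (HNode Y × HNode Y)} {x : HNode Y}
    (h : Reach E HNode.ua x) (hx : x ≠ HNode.ua) :
    ∃ c, (HNode.ua, c) ∈ E ∧ GReach (nonUAEdges E) c x := by
  induction h with
  | refl => exact absurd rfl hx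
  | @tail b c _ hbc ih =>
    by_cases hb : b = HNode.ua
    · subst hb
      exact ⟨c, hbc, .refl⟩
    · obtain ⟨c₀, hc₀, hreach⟩ := ih hb
      exact ⟨c₀, hc₀, hreach.tail ⟨hbc, hb⟩⟩

section HistorySDAG

variable {V : Set (HNode Y)} {E : Set (HNode Y × HNode Y)}

theorem IsHSDAG.exists_node_of_mem_nonUAEdges (hG : IsHSDAG V E) {a b : HNode Y}
    (h : (a, b) ∈ nonUAEdges E) :
    ∃ ℓ U, a = HNode.node ℓ U ∧ HNode.node ℓ U ∈ V ∧ IsPart U ∧ cladeUnion b ∈ U := by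
  obtain ⟨hab, ha⟩ := h
  cases a with
  | ua => exact absurd rfl ha
  | node ℓ U =>
    have haV := (hG.edge_mem _ hab).1
    exact ⟨ℓ, U, rfl, haV, hG.valid ℓ U haV, hG.edge_clade ℓ U b hab⟩

theorem IsHSDAG.cladeUnion_ssubset (hG : IsHSDAG V E) {a b : HNode Y}
    (h : (a, b) ∈ nonUAEdges E) : cladeUnion b ⊂ cladeUnion a := by
  obtain ⟨ℓ, U, rfl, -, hU, hC⟩ := hG.exists_node_of_mem_nonUAEdges h
  rw [cladeUnion_node_of_mem hC]
  exact hU.ssubset_sUnion_s17 hC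

theorem IsHSDAG.cladeUnion_nonempty_s17 (hG : IsHSDAG V E) {a b : HNode Y}
    (h : (a, b) ∈ nonUAEdges E) : (cladeUnion b).Nonempty := by
  obtain ⟨ℓ, U, rfl, -, hU, hC⟩ := hG.exists_node_of_mem_nonUAEdges h
  exact Set.nonempty_iff_ne_empty.mpr (hU.1 _ hC)

theorem IsHSDAG.cladeUnion_ssubset_of_transGen (hG : IsHSDAG V E) {a b : HNode Y}
    (h : Relation.TransGen (fun x y => (x, y) ∈ nonUAEdges E) a b) :
    cladeUnion b ⊂ cladeUnion a := by
  induction h with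
  | single hab => exact hG.cladeUnion_ssubset hab
  | tail _ hbc ih => exact (hG.cladeUnion_ssubset hbc).trans ih

theorem IsHSDAG.cladeUnion_subset_of_reach_s17 (hG : IsHSDAG V E) {a b : HNode Y}
    (h : GReach (nonUAEdges E) a b) : cladeUnion b ⊆ cladeUnion a := by
  induction h with
  | refl => exact subset_rfl
  | tail _ hbc ih => exact (hG.cladeUnion_ssubset hbc).subset.trans ih

theorem IsHSDAG.not_transGen_self (hG : IsHSDAG V E) (x : HNode Y) :
    ¬ Relation.TransGen (fun a b => (a, b) ∈ nonUAEdges E) x x :=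
  fun h => ssubset_irrefl _ (hG.cladeUnion_ssubset_of_transGen h)

theorem IsHSDAG.not_existsUnique_child (hG : IsHSDAG V E) (x : HNode Y) :
    ¬ ∃! c, (x, c) ∈ nonUAEdges E := by
  rintro ⟨c, hc, huniq⟩
  obtain ⟨ℓ, U, rfl, hxV, hU, hC⟩ := hG.exists_node_of_mem_nonUAEdges hc
  obtain ⟨C', hC', hne⟩ := hU.exists_ne_s17 hC
  obtain ⟨c', hc', rfl⟩ := hG.clade_cov ℓ U hxV C' hC'
  exact hne (congrArg cladeUnion (huniq c' ⟨hc', nofun⟩))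

theorem IsHSDAG.eq_empty_of_forall_not_mem_nonUAEdges (hG : IsHSDAG V E) {ℓ : Y}
    {U : Set (Set Y)} (hx : HNode.node ℓ U ∈ V)
    (hleaf : ∀ c, (HNode.node ℓ U, c) ∉ nonUAEdges E) : U = ∅ :=
  Set.eq_empty_iff_forall_notMem.mpr fun C hC =>
    let ⟨c, hc, _⟩ := hG.clade_cov ℓ U hx C hC
    hleaf c ⟨hc, nofun⟩

theorem IsHSDAG.disjoint_cladeUnion_of_siblings (hG : IsHSDAG V E) (hU : UniqueDesc V E)
    {w c₁ c₂ : HNode Y} (h₁ : (w, c₁) ∈ nonUAEdges E) (h₂ : (w, c₂) ∈ nonUAEdges E)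
    (hne : c₁ ≠ c₂) : Disjoint (cladeUnion c₁) (cladeUnion c₂) := by
  obtain ⟨ℓ, U, rfl, hwV, hUpart, hC₁⟩ := hG.exists_node_of_mem_nonUAEdges h₁
  have hC₂ := hG.edge_clade ℓ U c₂ h₂.1
  refine hUpart.2.1 _ hC₁ _ hC₂ fun hcc => hne ?_
  obtain ⟨_, -, huniq⟩ := hU ℓ U hwV _ hC₁
  exact (huniq c₁ ⟨h₁.1, rfl⟩).trans (huniq c₂ ⟨h₂.1, hcc.symm⟩).symm

theorem IsHSDAG.reach_or_reach_of_inter_nonempty (hG : IsHSDAG V E) (hU : UniqueDesc V E)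
    {u a b : HNode Y} (ha : GReach (nonUAEdges E) u a) (hb : GReach (nonUAEdges E) u b)
    (hab : (cladeUnion a ∩ cladeUnion b).Nonempty) :
    GReach (nonUAEdges E) a b ∨ GReach (nonUAEdges E) b a := by
  revert hb
  induction ha using Relation.ReflTransGen.head_induction_on with
  | refl => exact .inl
  | @head u c huc hca ih =>
    intro hb
    rcases hb.cases_head with rfl | ⟨c', huc', hc'b⟩
    · exact .inr (.head huc hca)
    by_cases hcc : c = c'
    · exact ih (hcc ▸ hc'b)
    obtain ⟨y, hya, hyb⟩ := hab
    exact absurd ((hG.cladeUnion_subset_of_reach_s17 hc'b) hyb)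
      (Set.disjoint_left.mp (hG.disjoint_cladeUnion_of_siblings hU huc huc' hcc)
        ((hG.cladeUnion_subset_of_reach_s17 hca) hya))

theorem IsHSDAG.eq_of_reach_of_mem_nonUAEdges (hG : IsHSDAG V E) (hU : UniqueDesc V E)
    {u a b x : HNode Y} (ha : GReach (nonUAEdges E) u a) (hb : GReach (nonUAEdges E) u b)
    (hax : (a, x) ∈ nonUAEdges E) (hbx : (b, x) ∈ nonUAEdges E) : a = b := by
  obtain ⟨y, hy⟩ := hG.cladeUnion_nonempty_s17 hax
  wlog hab : GReach (nonUAEdges E) a b generalizing a b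
  · have hmeet : (cladeUnion a ∩ cladeUnion b).Nonempty :=
      ⟨y, (hG.cladeUnion_ssubset hax).subset hy, (hG.cladeUnion_ssubset hbx).subset hy⟩
    rcases hG.reach_or_reach_of_inter_nonempty hU ha hb hmeet with h | h
    · exact this ha hb hax hbx h
    · exact (this hb ha hbx hax h).symm
  rcases hab.cases_head with rfl | ⟨c, hac, hcb⟩
  · rfl
  by_cases hcx : c = x
  · subst hcx
    exact absurd (Relation.TransGen.tail' hcb hbx) (hG.not_transGen_self c)
  have hyc : y ∈ cladeUnion c :=
    hG.cladeUnion_subset_of_reach_s17 hcb ((hG.cladeUnion_ssubset hbx).subset hy)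
  exact absurd hy
    (Set.disjoint_left.mp (hG.disjoint_cladeUnion_of_siblings hU hac hax hcx) hyc)

end HistorySDAG

/-- Lemma `correspondence_c_to_h`: dropping the UA node (and its unique
outgoing edge) from a history yields a rooted tree with no unifurcations whose labeling is
injective on leaves. -/
theorem history_to_labeled_tree
    (Vt : Set (HNode Y)) (Et : Set (HNode Y × HNode Y))
    (hin : HistoryIn (completeV Y) (completeE Y) Vt Et)
    (r : HNode Y) (hr : (HNode.ua, r) ∈ Et)
    (V' : Set (HNode Y)) (hV' : V' = Vt \ {HNode.ua})
    (E' : Set (HNode Y × HNode Y)) (hE' : E' = Et \ {(HNode.ua, r)}) :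
    (r ∈ V' ∧ ∀ x ∈ V', GReach E' r x) ∧
    (∀ x a b : HNode Y, (a, x) ∈ E' → (b, x) ∈ E' → a = b) ∧
    (∀ a : HNode Y, (a, r) ∉ E') ∧
    (∀ x : HNode Y, ¬ Relation.TransGen (fun a b => (a, b) ∈ E') x x) ∧
    (∀ x ∈ V', ¬ (∃! c, (x, c) ∈ E')) ∧
    (∀ ℓ U₁ U₂, HNode.node ℓ U₁ ∈ V' → HNode.node ℓ U₂ ∈ V' →
      IsLeafIn V' E' (HNode.node ℓ U₁) → IsLeafIn V' E' (HNode.node ℓ U₂) → U₁ = U₂) := by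
  obtain ⟨-, -, hG, ⟨_, -, hua⟩, hU⟩ := hin
  have hchild : ∀ v, (HNode.ua, v) ∈ Et → v = r := fun v hv => (hua v hv).trans (hua r hr).symm
  rw [diff_singleton_ua_eq_nonUAEdges hchild] at hE'
  subst hV' hE'
  have hrV : r ∈ Vt \ {HNode.ua} := ⟨(hG.edge_mem _ hr).2, fun h => hG.no_in_ua _ (h ▸ hr)⟩
  have hreach : ∀ x ∈ Vt \ {HNode.ua}, GReach (nonUAEdges Et) r x := by
    rintro x ⟨hx, hxua⟩
    obtain ⟨c, hc, hcx⟩ := exists_ua_child_reach (hG.reach_ua x hx) hxua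
    exact hchild c hc ▸ hcx
  have hsrc : ∀ {a x}, (a, x) ∈ nonUAEdges Et → a ∈ Vt \ {HNode.ua} :=
    fun h => ⟨(hG.edge_mem _ h.1).1, h.2⟩
  refine ⟨⟨hrV, hreach⟩, fun x a b hax hbx => ?_, fun a har => ?_, hG.not_transGen_self,
    fun x _ => hG.not_existsUnique_child x, ?_⟩
  · exact hG.eq_of_reach_of_mem_nonUAEdges hU (hreach a (hsrc hax)) (hreach b (hsrc hbx)) hax hbx
  · exact hG.not_transGen_self r (Relation.TransGen.tail' (hreach a (hsrc har)) har)
  · rintro ℓ U₁ U₂ ⟨h₁, -⟩ ⟨h₂, -⟩ ⟨-, hl₁⟩ ⟨-, hl₂⟩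
    rw [hG.eq_empty_of_forall_not_mem_nonUAEdges h₁ hl₁,
      hG.eq_empty_of_forall_not_mem_nonUAEdges h₂ hl₂]

end HistorySDAGs
end

section
/- Let (V,E) be the complete history sDAG on labels Y and let t = (τ,φ) be an internally labeled tree with labels in Y and root node w₀. For each node w of τ, let C_w ⊆ Y be the set of leaf labels below w, and set v_w = (φ(w), {C_{w'} : w' a child of w}). Define V_t = {v_w : w a node of t} ∪ {ρ} and E_t = {(v_{w₁},v_{w₂}) : (w₁,w₂) an edge of t} ∪ {(ρ,v_{w₀})}. Then the correspondence t ↦ (V_t,E_t) is a well-defined map from internally labeled trees with labels in Y to histories in (V,E): w ↦ v_w is a well-defined injection, the induced map on edges is a well-defined injection, and (V_t,E_t) is a history in (V,E). -/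
universe u v

namespace HistorySDAGs

variable {Y : Type u}

variable {W : Type v}

/-!
Since leaf labels are distinct, a node `w` of the tree is determined by its leaf set `C_w`:
if `C_x = C_y` then `x` and `y` lie on a common root path, and if `x` were a proper ancestor
of `y`, the child of `x` off that path (which exists as there are no unifurcations) would
contribute leaves to `C_x` outside `C_y`. Hence `w ↦ v_w` and the edge map are injective, the
child clades `C_{w'}` of `w` are distinct and pairwise disjoint (distinct subtrees share no
leaf), and each child clade of `v_w` is the clade union of exactly one child node. These are
the axioms of a history, and every history lies in the complete history sDAG.
-/

lemma IsHSDAG.subset_completeV_s18 {V : Set (HNode Y)} {E : Set (HNode Y × HNode Y)}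
    (h : IsHSDAG V E) : V ⊆ completeV Y := by
  rintro (_ | ⟨ℓ, U⟩) hv
  · exact Or.inl rfl
  · exact Or.inr ⟨ℓ, U, rfl, h.valid ℓ U hv⟩

lemma IsHSDAG.subset_completeE_s18 {V : Set (HNode Y)} {E : Set (HNode Y × HNode Y)}
    (h : IsHSDAG V E) : E ⊆ completeE Y := by
  rintro ⟨v₁, v₂⟩ he
  refine ⟨h.subset_completeV_s18 (h.edge_mem _ he).1, h.subset_completeV_s18 (h.edge_mem _ he).2,
    ?_, ?_⟩
  · rintro rfl
    exact h.no_in_ua v₁ he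
  · cases v₁ with
    | ua => exact Or.inl rfl
    | node ℓ U => exact Or.inr ⟨ℓ, U, rfl, h.edge_clade ℓ U v₂ he⟩

lemma IsHistory.historyIn_complete {V : Set (HNode Y)} {E : Set (HNode Y × HNode Y)}
    (h : IsHistory V E) : HistoryIn (completeV Y) (completeE Y) V E :=
  ⟨h.1.subset_completeV_s18, h.1.subset_completeE_s18, h⟩

section LabeledTree

variable {α : Type v} {nodes : Set α} {edges : Set (α × α)} {root : α} {lab : α → Y}

lemma GReach.eq_of_forall_notMem {u w : α} (hu : ∀ c, (u, c) ∉ edges)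
    (h : GReach edges u w) : w = u := by
  rcases Relation.ReflTransGen.cases_head h with h | ⟨c, hc, -⟩
  · exact h.symm
  · exact absurd hc (hu c)

lemma GReach.total_of_unique_parent
    (hup : ∀ x a b, (a, x) ∈ edges → (b, x) ∈ edges → a = b) {a b u : α}
    (hau : GReach edges a u) (hbu : GReach edges b u) :
    GReach edges a b ∨ GReach edges b a := by
  induction hau with
  | refl => exact Or.inr hbu
  | @tail p u hap hpu ih =>
    rcases Relation.ReflTransGen.cases_tail hbu with rfl | ⟨q, hbq, hqu⟩
    · exact Or.inl (hap.tail hpu)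
    · exact ih (hup u q p hqu hpu ▸ hbq)

lemma leavesBelow_subset_of_greach {x y : α} (h : GReach edges x y) :
    leavesBelow nodes edges lab y ⊆ leavesBelow nodes edges lab x := by
  rintro _ ⟨u, hu, hyu, rfl⟩
  exact ⟨u, hu, h.trans hyu, rfl⟩

lemma leavesBelow_subset_image {x : α} : leavesBelow nodes edges lab x ⊆ lab '' nodes := by
  rintro _ ⟨u, hu, -, rfl⟩
  exact ⟨u, hu.1, rfl⟩

namespace IsLabeledTree

variable (ht : IsLabeledTree nodes edges root lab)
include ht

lemma not_greach_of_mem_edges {w c : α} (hwc : (w, c) ∈ edges) : ¬ GReach edges c w :=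
  fun h => ht.acyclic w (Relation.TransGen.head' hwc h)

/-- Descend to a node whose set of descendants is minimal; it can have no child. -/
lemma exists_leaf_greach {x : α} (hx : x ∈ nodes) :
    ∃ u, IsLeafIn nodes edges u ∧ GReach edges x u := by
  obtain ⟨u, ⟨hun, hxu⟩, hmin⟩ := Set.Finite.exists_minimalFor
    (fun v => {w | GReach edges v w}) {v ∈ nodes | GReach edges x v}
    (ht.finite.subset fun _ hv => hv.1) ⟨x, hx, .refl⟩
  refine ⟨u, ⟨hun, fun c hc => ?_⟩, hxu⟩
  have hsub : {w | GReach edges c w} ⊆ {w | GReach edges u w} :=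
    fun w hcw => Relation.ReflTransGen.head hc hcw
  exact ht.not_greach_of_mem_edges hc
    (hmin ⟨(ht.edge_mem _ hc).2, hxu.tail hc⟩ hsub .refl)

lemma exists_ne_child {x c : α} (hx : x ∈ nodes) (hc : (x, c) ∈ edges) :
    ∃ c', (x, c') ∈ edges ∧ c' ≠ c := by
  by_contra! h
  exact ht.no_unif x hx ⟨c, hc, h⟩

lemma eq_of_greach_of_siblings {w c₁ c₂ : α} (h₁ : (w, c₁) ∈ edges) (h₂ : (w, c₂) ∈ edges)
    (h : GReach edges c₁ c₂) : c₁ = c₂ := by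
  rcases Relation.ReflTransGen.cases_tail h with h | ⟨q, hq, hqc⟩
  · exact h.symm
  · rw [ht.unique_parent c₂ q w hqc h₂] at hq
    exact absurd hq (ht.not_greach_of_mem_edges h₁)

lemma eq_of_siblings_of_greach {w c₁ c₂ u : α} (h₁ : (w, c₁) ∈ edges)
    (h₂ : (w, c₂) ∈ edges) (r₁ : GReach edges c₁ u) (r₂ : GReach edges c₂ u) : c₁ = c₂ := by
  rcases GReach.total_of_unique_parent ht.unique_parent r₁ r₂ with h | h
  · exact ht.eq_of_greach_of_siblings h₁ h₂ h
  · exact (ht.eq_of_greach_of_siblings h₂ h₁ h).symm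

lemma leavesBelow_nonempty {x : α} (hx : x ∈ nodes) :
    (leavesBelow nodes edges lab x).Nonempty := by
  obtain ⟨u, hu, hxu⟩ := ht.exists_leaf_greach hx
  exact ⟨lab u, u, hu, hxu, rfl⟩

lemma lab_mem_leavesBelow_iff {x u : α} (hu : IsLeafIn nodes edges u) :
    lab u ∈ leavesBelow nodes edges lab x ↔ GReach edges x u := by
  refine ⟨?_, fun h => ⟨u, hu, h, rfl⟩⟩
  rintro ⟨u', hu', hxu', hl⟩
  rwa [ht.leaf_inj u' u hu' hu hl.symm] at hxu'

lemma eq_of_greach_of_leavesBelow_subset {x y : α} (hx : x ∈ nodes) (hxy : GReach edges x y)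
    (hsub : leavesBelow nodes edges lab x ⊆ leavesBelow nodes edges lab y) : x = y := by
  rcases Relation.ReflTransGen.cases_head hxy with h | ⟨c₁, hc₁, hc₁y⟩
  · exact h
  obtain ⟨c₂, hc₂, hne⟩ := ht.exists_ne_child hx hc₁
  obtain ⟨u, hu, hc₂u⟩ := ht.exists_leaf_greach (ht.edge_mem _ hc₂).2
  have hyu : GReach edges y u := (ht.lab_mem_leavesBelow_iff hu).1
    (hsub ⟨u, hu, Relation.ReflTransGen.head hc₂ hc₂u, rfl⟩)
  exact absurd (ht.eq_of_siblings_of_greach hc₂ hc₁ hc₂u (hc₁y.trans hyu)) hne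

lemma leavesBelow_injOn : Set.InjOn (leavesBelow nodes edges lab) nodes := by
  intro x hx y hy h
  obtain ⟨u, hu, hxu⟩ := ht.exists_leaf_greach hx
  have hyu : GReach edges y u := (ht.lab_mem_leavesBelow_iff hu).1 (h ▸ ⟨u, hu, hxu, rfl⟩)
  rcases GReach.total_of_unique_parent ht.unique_parent hxu hyu with hxy | hyx
  · exact ht.eq_of_greach_of_leavesBelow_subset hx hxy h.subset
  · exact (ht.eq_of_greach_of_leavesBelow_subset hy hyx h.symm.subset).symm

end IsLabeledTree

variable (nodes edges lab) in
def childClades (w : α) : Set (Set Y) :=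
  {C | ∃ w', (w, w') ∈ edges ∧ C = leavesBelow nodes edges lab w'}

lemma childClades_eq_empty_iff {w : α} :
    childClades nodes edges lab w = ∅ ↔ ∀ c, (w, c) ∉ edges := by
  rw [Set.eq_empty_iff_forall_notMem]
  exact ⟨fun h c hc => h _ ⟨c, hc, rfl⟩, fun h _ ⟨c, hc, _⟩ => h c hc⟩

lemma sUnion_childClades {w : α} (hw : ∃ c, (w, c) ∈ edges) :
    ⋃₀ childClades nodes edges lab w = leavesBelow nodes edges lab w := by
  refine subset_antisymm (Set.sUnion_subset ?_) ?_
  · rintro _ ⟨c, hc, rfl⟩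
    exact leavesBelow_subset_of_greach (.single hc)
  · rintro _ ⟨u, hu, hwu, rfl⟩
    rcases Relation.ReflTransGen.cases_head hwu with rfl | ⟨c, hc, hcu⟩
    · obtain ⟨c, hc⟩ := hw
      exact absurd hc (hu.2 c)
    · exact ⟨_, ⟨c, hc, rfl⟩, u, hu, hcu, rfl⟩

lemma leavesBelow_eq_singleton {w : α} (hw : IsLeafIn nodes edges w) :
    leavesBelow nodes edges lab w = {lab w} := by
  refine subset_antisymm ?_ (Set.singleton_subset_iff.2 ⟨w, hw, .refl, rfl⟩)
  rintro _ ⟨u, -, hwu, rfl⟩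
  rw [GReach.eq_of_forall_notMem hw.2 hwu, Set.mem_singleton_iff]

lemma cladeUnion_treeNodeOf {w : α} (hw : w ∈ nodes) :
    cladeUnion (treeNodeOf nodes edges lab w) = leavesBelow nodes edges lab w := by
  change cladeUnion (HNode.node (lab w) (childClades nodes edges lab w)) = _
  by_cases hleaf : ∀ c, (w, c) ∉ edges
  · rw [cladeUnion, if_pos (childClades_eq_empty_iff.2 hleaf),
      leavesBelow_eq_singleton ⟨hw, hleaf⟩]
  · rw [cladeUnion, if_neg (mt childClades_eq_empty_iff.1 hleaf),
      sUnion_childClades (not_forall_not.1 hleaf)]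

lemma IsLabeledTree.isPart_childClades (ht : IsLabeledTree nodes edges root lab) {w : α}
    (hw : w ∈ nodes) : IsPart (childClades nodes edges lab w) := by
  refine ⟨?nonempty, ?disjoint, ?not_singleton, ?finite, ?finite_clades⟩
  case nonempty =>
    rintro _ ⟨c, hc, rfl⟩
    exact (ht.leavesBelow_nonempty (ht.edge_mem _ hc).2).ne_empty
  case disjoint =>
    rintro _ ⟨c₁, hc₁, rfl⟩ _ ⟨c₂, hc₂, rfl⟩ hne
    refine Set.disjoint_left.2 ?_
    rintro _ ⟨u, hu, hc₁u, rfl⟩ hu₂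
    exact hne (congrArg _ (ht.eq_of_siblings_of_greach hc₁ hc₂ hc₁u
      ((ht.lab_mem_leavesBelow_iff hu).1 hu₂)))
  case not_singleton =>
    intro C hC
    obtain ⟨c₁, hc₁, -⟩ : C ∈ childClades nodes edges lab w := hC ▸ rfl
    obtain ⟨c₂, hc₂, hne⟩ := ht.exists_ne_child hw hc₁
    have hC₁ : leavesBelow nodes edges lab c₁ = C := hC.subset ⟨c₁, hc₁, rfl⟩
    have hC₂ : leavesBelow nodes edges lab c₂ = C := hC.subset ⟨c₂, hc₂, rfl⟩
    exact hne (ht.leavesBelow_injOn (ht.edge_mem _ hc₂).2 (ht.edge_mem _ hc₁).2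
      (hC₂.trans hC₁.symm))
  case finite =>
    refine (ht.finite.image (leavesBelow nodes edges lab)).subset ?_
    rintro _ ⟨c, hc, rfl⟩
    exact ⟨c, (ht.edge_mem _ hc).2, rfl⟩
  case finite_clades =>
    rintro _ ⟨c, -, rfl⟩
    exact (ht.finite.image lab).subset leavesBelow_subset_image

lemma treeNodeOf_ne_ua {w : α} : treeNodeOf nodes edges lab w ≠ HNode.ua :=
  nofun

lemma IsLabeledTree.treeNodeOf_injOn (ht : IsLabeledTree nodes edges root lab) :
    Set.InjOn (treeNodeOf nodes edges lab) nodes := fun x hx y hy h => by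
  apply ht.leavesBelow_injOn hx hy
  rw [← cladeUnion_treeNodeOf hx, ← cladeUnion_treeNodeOf hy, h]

lemma IsLabeledTree.treeNodeOf_prodMap_injOn (ht : IsLabeledTree nodes edges root lab) :
    Set.InjOn (Prod.map (treeNodeOf nodes edges lab) (treeNodeOf nodes edges lab)) edges :=
  (ht.treeNodeOf_injOn.prodMap ht.treeNodeOf_injOn).mono fun e he => ht.edge_mem e he

lemma exists_of_node_mem_treeToHistV {ℓ : Y} {U : Set (Set Y)}
    (h : HNode.node ℓ U ∈ treeToHistV nodes edges lab) :
    ∃ w ∈ nodes, ℓ = lab w ∧ U = childClades nodes edges lab w := by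
  obtain ⟨w, hw, hwU⟩ := (Set.mem_insert_iff.1 h).resolve_left nofun
  obtain ⟨rfl, rfl⟩ := HNode.node.inj hwU
  exact ⟨w, hw, rfl, rfl⟩

lemma ua_mem_treeToHistE_iff {v : HNode Y} :
    (HNode.ua, v) ∈ treeToHistE nodes edges root lab ↔ v = treeNodeOf nodes edges lab root := by
  refine ⟨?_, fun h => h ▸ Set.mem_insert _ _⟩
  rintro (h | ⟨w₁, w₂, -, h⟩)
  · exact congrArg Prod.snd h
  · exact absurd (congrArg Prod.fst h).symm treeNodeOf_ne_ua

lemma notMem_treeToHistE_ua {v : HNode Y} :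
    (v, HNode.ua) ∉ treeToHistE nodes edges root lab := by
  rintro (h | ⟨w₁, w₂, -, h⟩)
  · exact treeNodeOf_ne_ua (congrArg Prod.snd h).symm
  · exact treeNodeOf_ne_ua (congrArg Prod.snd h).symm

lemma IsLabeledTree.treeNodeOf_mem_treeToHistE_iff (ht : IsLabeledTree nodes edges root lab)
    {w : α} (hw : w ∈ nodes) {v : HNode Y} :
    (treeNodeOf nodes edges lab w, v) ∈ treeToHistE nodes edges root lab ↔
      ∃ c, (w, c) ∈ edges ∧ v = treeNodeOf nodes edges lab c := by
  refine ⟨?_, fun ⟨c, hc, hv⟩ => Set.mem_insert_of_mem _ ⟨w, c, hc, hv ▸ rfl⟩⟩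
  rintro (h | ⟨w₁, c, hc, h⟩)
  · exact absurd (congrArg Prod.fst h) treeNodeOf_ne_ua
  · obtain ⟨hw₁, rfl⟩ := Prod.ext_iff.1 h
    rw [ht.treeNodeOf_injOn hw (ht.edge_mem _ hc).1 hw₁]
    exact ⟨c, hc, rfl⟩

lemma IsLabeledTree.mem_treeToHistV_of_mem_treeToHistE
    (ht : IsLabeledTree nodes edges root lab) {e : HNode Y × HNode Y}
    (he : e ∈ treeToHistE nodes edges root lab) :
    e.1 ∈ treeToHistV nodes edges lab ∧ e.2 ∈ treeToHistV nodes edges lab := by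
  rcases he with rfl | ⟨w₁, w₂, h, rfl⟩
  · exact ⟨Set.mem_insert _ _, Set.mem_insert_of_mem _ (Set.mem_image_of_mem _ ht.root_mem)⟩
  · exact ⟨Set.mem_insert_of_mem _ (Set.mem_image_of_mem _ (ht.edge_mem _ h).1),
      Set.mem_insert_of_mem _ (Set.mem_image_of_mem _ (ht.edge_mem _ h).2)⟩

lemma IsLabeledTree.reach_ua_of_mem_treeToHistV (ht : IsLabeledTree nodes edges root lab)
    {v : HNode Y} (hv : v ∈ treeToHistV nodes edges lab) :
    Reach (treeToHistE nodes edges root lab) HNode.ua v := by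
  rcases hv with rfl | ⟨w, hw, rfl⟩
  · exact .refl
  · refine .head (ua_mem_treeToHistE_iff.2 rfl) ((ht.reach_root w hw).lift _ ?_)
    exact fun a b hab => Set.mem_insert_of_mem _ ⟨a, b, hab, rfl⟩

lemma IsLabeledTree.cladeUnion_mem_childClades (ht : IsLabeledTree nodes edges root lab)
    {w : α} (hw : w ∈ nodes) {v : HNode Y}
    (he : (treeNodeOf nodes edges lab w, v) ∈ treeToHistE nodes edges root lab) :
    cladeUnion v ∈ childClades nodes edges lab w := by
  obtain ⟨c, hc, rfl⟩ := (ht.treeNodeOf_mem_treeToHistE_iff hw).1 he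
  exact ⟨c, hc, cladeUnion_treeNodeOf (ht.edge_mem _ hc).2⟩

lemma IsLabeledTree.existsUnique_treeToHistE_of_mem_childClades
    (ht : IsLabeledTree nodes edges root lab) {w : α} (hw : w ∈ nodes) {C : Set Y}
    (hC : C ∈ childClades nodes edges lab w) :
    ∃! v, (treeNodeOf nodes edges lab w, v) ∈ treeToHistE nodes edges root lab ∧
      cladeUnion v = C := by
  obtain ⟨c, hc, rfl⟩ := hC
  have hcn : c ∈ nodes := (ht.edge_mem _ hc).2
  refine ⟨treeNodeOf nodes edges lab c,
    ⟨(ht.treeNodeOf_mem_treeToHistE_iff hw).2 ⟨c, hc, rfl⟩, cladeUnion_treeNodeOf hcn⟩, ?_⟩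
  rintro v ⟨hv, hvC⟩
  obtain ⟨c', hc', rfl⟩ := (ht.treeNodeOf_mem_treeToHistE_iff hw).1 hv
  have hc'n : c' ∈ nodes := (ht.edge_mem _ hc').2
  rw [ht.leavesBelow_injOn hc'n hcn ((cladeUnion_treeNodeOf hc'n).symm.trans hvC)]

lemma IsLabeledTree.uniqueDesc_treeToHist (ht : IsLabeledTree nodes edges root lab) :
    UniqueDesc (treeToHistV nodes edges lab) (treeToHistE nodes edges root lab) := by
  intro ℓ U hv C hC
  obtain ⟨w, hw, rfl, rfl⟩ := exists_of_node_mem_treeToHistV hv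
  exact ht.existsUnique_treeToHistE_of_mem_childClades hw hC

lemma IsLabeledTree.isHSDAG_treeToHist (ht : IsLabeledTree nodes edges root lab) :
    IsHSDAG (treeToHistV nodes edges lab) (treeToHistE nodes edges root lab) where
  ua_mem := Set.mem_insert _ _
  valid ℓ U hv := by
    obtain ⟨w, hw, rfl, rfl⟩ := exists_of_node_mem_treeToHistV hv
    exact ht.isPart_childClades hw
  edge_mem _ := ht.mem_treeToHistV_of_mem_treeToHistE
  reach_ua _ := ht.reach_ua_of_mem_treeToHistV
  no_in_ua _ := notMem_treeToHistE_ua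
  edge_clade ℓ U v he := by
    obtain ⟨w, hw, rfl, rfl⟩ :=
      exists_of_node_mem_treeToHistV (ht.mem_treeToHistV_of_mem_treeToHistE he).1
    exact ht.cladeUnion_mem_childClades hw he
  clade_cov ℓ U hv C hC := (ht.uniqueDesc_treeToHist ℓ U hv C hC).exists

lemma IsLabeledTree.isHistory_treeToHist (ht : IsLabeledTree nodes edges root lab) :
    IsHistory (treeToHistV nodes edges lab) (treeToHistE nodes edges root lab) :=
  ⟨ht.isHSDAG_treeToHist, ⟨_, ua_mem_treeToHistE_iff.2 rfl, fun _ => ua_mem_treeToHistE_iff.1⟩,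
    ht.uniqueDesc_treeToHist⟩

end LabeledTree

/-- Lemma `correspondence_h_to_c`: the map sending an internally
labeled tree to its history is well-defined: `w ↦ v_w` is injective, the induced map on
edges is injective, and the resulting pair is a history in the complete history sDAG. -/
theorem labeled_tree_to_history {α : Type v}
    (nodes : Set α) (edges : Set (α × α)) (root : α) (lab : α → Y)
    (ht : IsLabeledTree nodes edges root lab) :
    Set.InjOn (treeNodeOf nodes edges lab) nodes ∧
    (∀ e₁ ∈ edges, ∀ e₂ ∈ edges,
      (treeNodeOf nodes edges lab e₁.1, treeNodeOf nodes edges lab e₁.2) =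
        (treeNodeOf nodes edges lab e₂.1, treeNodeOf nodes edges lab e₂.2) → e₁ = e₂) ∧
    HistoryIn (completeV Y) (completeE Y)
      (treeToHistV nodes edges lab) (treeToHistE nodes edges root lab) :=
  ⟨ht.treeNodeOf_injOn, fun _ he₁ _ he₂ h => ht.treeNodeOf_prodMap_injOn he₁ he₂ h,
    ht.isHistory_treeToHist.historyIn_complete⟩

end HistorySDAGs
end
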